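/- arXiv:2507.21470 — 3 statements merged into one kernel-verified Lean document; each statement's English description precedes it below -/
import Mathlib

section
/- Let σ : ℝ → ℝ be C² with σ'(v) > 0 everywhere, σ''(v) < 0 for v < 0 and σ''(v) > 0 for v > 0. Let v_l < 0 < v_r and s > 0 satisfy s² = (σ(v_r) - σ(v_l))/(v_r - v_l), and define h(v) := -s²v + σ(v) - a where a := -s²v_l + σ(v_l) (so h(v_l) = h(v_r) = 0). If σ'(v_r) ≤ s², then h(v) > 0 for all v ∈ (v_l, v_r). -/
open Real Set

/-!
Since `h` differs from `σ` by an affine function, `h' = σ' - s²` and `h'' = σ''`. On `[0, v_r]`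
the derivative `σ'` is strictly increasing, so `h' < σ'(v_r) - s² ≤ 0` on `[0, v_r)` and `h`
strictly decreases to `h(v_r) = 0`; in particular `h(0) > 0`. On `[v_l, 0]` the function `h` is
concave, with `h(v_l) = 0` and `h(0) > 0`, hence positive on `(v_l, 0]`.
-/

theorem ConcaveOn.pos_of_mem_Ioc {f : ℝ → ℝ} {a b x : ℝ} (hf : ConcaveOn ℝ (Icc a b) f)
    (ha : 0 ≤ f a) (hb : 0 < f b) (hx : x ∈ Ioc a b) : 0 < f x := by
  rcases hx.2.eq_or_lt with rfl | hxb
  · exact hb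
  have hab : a ≤ b := hx.1.le.trans hx.2
  have hseg : x ∈ openSegment ℝ b a := by
    rw [openSegment_symm, openSegment_eq_Ioo (hx.1.trans hxb)]
    exact ⟨hx.1, hxb⟩
  rcases lt_or_ge (f x) (f b) with hlt | hge
  · exact ha.trans_lt (hf.lt_right_of_left_lt (right_mem_Icc.2 hab) (left_mem_Icc.2 hab) hseg hlt)
  · exact hb.trans_le hge

theorem strictMonoOn_deriv_of_iteratedDeriv_two_pos {f : ℝ → ℝ} {D : Set ℝ} (hD : Convex ℝ D)
    (hf : ContDiff ℝ 2 f) (hpos : ∀ x ∈ interior D, 0 < iteratedDeriv 2 f x) :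
    StrictMonoOn (deriv f) D :=
  strictMonoOn_of_deriv_pos hD (hf.continuous_deriv one_le_two).continuousOn fun x hx => by
    simpa [iteratedDeriv_succ] using hpos x hx

section AffinePerturbation

variable {σ h : ℝ → ℝ} {c d : ℝ}

theorem hasDerivAt_of_eq_affine_add (hσ : Differentiable ℝ σ) (hh : ∀ v, h v = -c * v + σ v - d)
    (x : ℝ) : HasDerivAt h (deriv σ x - c) x := by
  rw [funext hh]
  have hsum : HasDerivAt (fun v => -c * v + σ v - d) (-c * 1 + deriv σ x) x :=
    (((hasDerivAt_id x).const_mul (-c)).add (hσ x).hasDerivAt).sub_const d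
  exact hsum.congr_deriv (by ring)

theorem strictConcaveOn_of_eq_affine_add (hσ : ContDiff ℝ 2 σ) (hh : ∀ v, h v = -c * v + σ v - d)
    {D : Set ℝ} (hD : Convex ℝ D) (hneg : ∀ x ∈ interior D, iteratedDeriv 2 σ x < 0) :
    StrictConcaveOn ℝ D h := by
  have hderiv := hasDerivAt_of_eq_affine_add (hσ.differentiable two_ne_zero) hh
  refine strictConcaveOn_of_deriv2_neg hD (fun x _ => (hderiv x).continuousAt.continuousWithinAt)
    fun x hx => ?_
  have hderiv_eq : deriv h = fun x => deriv σ x - c := funext fun x => (hderiv x).deriv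
  simpa [hderiv_eq, iteratedDeriv_succ] using hneg x hx

theorem strictAntiOn_Icc_of_eq_affine_add (hσ : ContDiff ℝ 2 σ) (hh : ∀ v, h v = -c * v + σ v - d)
    {a b : ℝ} (hpos : ∀ x ∈ Ioo a b, 0 < iteratedDeriv 2 σ x) (hb : deriv σ b ≤ c) :
    StrictAntiOn h (Icc a b) := by
  have hderiv := hasDerivAt_of_eq_affine_add (hσ.differentiable two_ne_zero) hh
  have hmono := strictMonoOn_deriv_of_iteratedDeriv_two_pos (convex_Icc a b) hσ
    (by rwa [interior_Icc])
  refine strictAntiOn_of_deriv_neg (convex_Icc a b)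
    (fun x _ => (hderiv x).continuousAt.continuousWithinAt) fun x hx => ?_
  rw [interior_Icc] at hx
  have hlt : deriv σ x < deriv σ b :=
    hmono (Ioo_subset_Icc_self hx) (right_mem_Icc.2 (hx.1.trans hx.2).le) hx.2
  rw [(hderiv x).deriv]
  linarith

end AffinePerturbation

theorem stmt_1_general (σ : ℝ → ℝ) (v_l v_r s a : ℝ) (h : ℝ → ℝ)
    (hσ : ContDiff ℝ 2 σ)
    (hσ''neg : ∀ v < 0, iteratedDeriv 2 σ v < 0)
    (hσ''pos : ∀ v > 0, iteratedDeriv 2 σ v > 0)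
    (hvl : v_l < 0) (hvr : 0 < v_r)
    (hspeed : s ^ 2 = (σ v_r - σ v_l) / (v_r - v_l))
    (ha : a = -s ^ 2 * v_l + σ v_l)
    (hh : ∀ v, h v = -s ^ 2 * v + σ v - a)
    (hLax : deriv σ v_r ≤ s ^ 2) :
    ∀ v ∈ Ioo v_l v_r, h v > 0 := by
  have hl : h v_l = 0 := by rw [hh, ha]; ring
  have hr : h v_r = 0 := by
    have : v_r - v_l ≠ 0 := by linarith
    rw [hh, ha, hspeed]
    field_simp
    ring
  have hanti : StrictAntiOn h (Icc 0 v_r) :=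
    strictAntiOn_Icc_of_eq_affine_add hσ hh (fun x hx => hσ''pos x hx.1) hLax
  have hconc : ConcaveOn ℝ (Icc v_l 0) h :=
    (strictConcaveOn_of_eq_affine_add hσ hh (convex_Icc v_l 0) fun x hx =>
      hσ''neg x (interior_Icc (a := v_l) ▸ hx).2).concaveOn
  have h0 : 0 < h 0 := hr ▸ hanti (left_mem_Icc.2 hvr.le) (right_mem_Icc.2 hvr.le) hvr
  rintro v ⟨hlv, hvr'⟩
  rcases le_or_gt v 0 with hv0 | hv0
  · exact hconc.pos_of_mem_Ioc hl.ge h0 ⟨hlv, hv0⟩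
  · exact hr ▸ hanti ⟨hv0.le, hvr'.le⟩ (right_mem_Icc.2 hvr.le) hvr'

theorem stmt_1 (σ : ℝ → ℝ) (v_l v_r s a : ℝ) (h : ℝ → ℝ)
    (hσ : ContDiff ℝ 2 σ) (hσ' : ∀ v, deriv σ v > 0)
    (hσ''neg : ∀ v < 0, iteratedDeriv 2 σ v < 0)
    (hσ''pos : ∀ v > 0, iteratedDeriv 2 σ v > 0)
    (hvl : v_l < 0) (hvr : 0 < v_r) (hs : s > 0)
    (hspeed : s ^ 2 = (σ v_r - σ v_l) / (v_r - v_l))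
    (ha : a = -s ^ 2 * v_l + σ v_l)
    (hh : ∀ v, h v = -s ^ 2 * v + σ v - a)
    (hLax : deriv σ v_r ≤ s ^ 2) :
    ∀ v ∈ Ioo v_l v_r, h v > 0 :=
  stmt_1_general σ v_l v_r s a h hσ hσ''neg hσ''pos hvl hvr hspeed ha hh hLax
end

section
/- Fix H > 0, v_i ∈ ℝ, and constants s, μ > 0, h_b > 0, M. Let c(v) := H(1/H + v_i − v) and a(v) := c(v)^{5/4} on [v_i, v_i + 1/(2H)], and let h : ℝ → ℝ satisfy h(v) ≥ h_b > 0 and 0 ≤ s² − σ'(v) ≤ M on this interval. If H ≥ 8M/h_b, then for all v in the interval with c(v) ∈ [1/2, 1], ((3/16)(a'(v))²/a(v) − a''(v)/2) · (h(v)/(sμ))² + a'(v) h(v)(s² − σ'(v))/(2 s² μ²) ≥ (h(v)/(s²μ²)) · ((35H²/256) h_b − (5H/8) M) ≥ 0. -/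
open Real Set

set_option maxHeartbeats 1000000 in
theorem stmt_15 (σ h : ℝ → ℝ) (H v_i s μ h_b M : ℝ)
    (hH : H > 0) (hs : s > 0) (hμ : μ > 0) (hhb : h_b > 0) (hM : M ≥ 0)
    (c a : ℝ → ℝ)
    (hc : ∀ v, c v = H * (1 / H + v_i - v))
    (ha : ∀ v, a v = c v ^ ((5 : ℝ) / 4))
    (hhlow : ∀ v ∈ Icc v_i (v_i + 1 / (2 * H)), h v ≥ h_b)
    (hσbd : ∀ v ∈ Icc v_i (v_i + 1 / (2 * H)),
      0 ≤ s ^ 2 - deriv σ v ∧ s ^ 2 - deriv σ v ≤ M)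
    (hHbig : H ≥ 8 * M / h_b) :
    ∀ v ∈ Icc v_i (v_i + 1 / (2 * H)), c v ∈ Icc (1 / 2 : ℝ) 1 →
      ((3 / 16) * (deriv a v) ^ 2 / a v - iteratedDeriv 2 a v / 2)
          * (h v / (s * μ)) ^ 2
        + deriv a v * h v * (s ^ 2 - deriv σ v) / (2 * s ^ 2 * μ ^ 2) ≥
        (h v / (s ^ 2 * μ ^ 2)) * ((35 * H ^ 2 / 256) * h_b - (5 * H / 8) * M)
      ∧ (h v / (s ^ 2 * μ ^ 2)) * ((35 * H ^ 2 / 256) * h_b - (5 * H / 8) * M) ≥ 0 := by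
  intro v hv hcv
  obtain ⟨hc1, hc2⟩ := hcv
  have hcpos : (0 : ℝ) < c v := lt_of_lt_of_le (by norm_num) hc1
  have hcne : c v ≠ 0 := ne_of_gt hcpos
  -- derivative of c at any point
  have hcderiv : ∀ w : ℝ, HasDerivAt c (-H) w := by
    intro w
    have : HasDerivAt (fun x : ℝ => H * (1 / H + v_i - x)) (H * (-1)) w :=
      (((hasDerivAt_id w).const_sub (1 / H + v_i))).const_mul H
    have hfun : c = fun x : ℝ => H * (1 / H + v_i - x) := funext hc
    rw [hfun]
    simpa using this
  have haf : a = fun w => c w ^ ((5 : ℝ) / 4) := funext ha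
  -- first derivative of a, everywhere (since 5/4 ≥ 1)
  have hderiv1 : ∀ w : ℝ, HasDerivAt a (-H * (5 / 4) * c w ^ ((5 : ℝ) / 4 - 1)) w := by
    intro w
    rw [haf]
    exact (hcderiv w).rpow_const (Or.inr (by norm_num))
  have hda : deriv a = fun w => -H * (5 / 4) * c w ^ ((5 : ℝ) / 4 - 1) :=
    funext fun w => (hderiv1 w).deriv
  have hdav : deriv a v = -(5 * H / 4) * c v ^ ((1 : ℝ) / 4) := by
    simp only [hda]
    have h14 : (5 : ℝ) / 4 - 1 = 1 / 4 := by norm_num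
    rw [h14]; ring
  -- second derivative at v
  have hderiv2 : HasDerivAt (fun w => -H * (5 / 4) * c w ^ ((5 : ℝ) / 4 - 1))
      (-H * (5 / 4) * (-H * ((5 : ℝ) / 4 - 1) * c v ^ ((5 : ℝ) / 4 - 1 - 1))) v := by
    exact (((hcderiv v).rpow_const (Or.inl hcne)).const_mul _)
  have hiter : iteratedDeriv 2 a v = 5 * H ^ 2 / 16 * c v ^ (-(3 : ℝ) / 4) := by
    have h2 : iteratedDeriv 2 a v = deriv (deriv a) v := by
      rw [iteratedDeriv_succ, iteratedDeriv_one]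
    rw [h2, hda, hderiv2.deriv]
    norm_num
    ring_nf
  set x := c v with hxdef
  set y := x ^ ((1 : ℝ) / 4) with hydef
  set z := x ^ (-(3 : ℝ) / 4) with hzdef
  have hy0 : 0 < y := rpow_pos_of_pos hcpos _
  have hz0 : 0 < z := rpow_pos_of_pos hcpos _
  have hy1 : y ≤ 1 := by
    rw [hydef]
    calc x ^ ((1 : ℝ) / 4) ≤ 1 ^ ((1 : ℝ) / 4) :=
          rpow_le_rpow (le_of_lt hcpos) hc2 (by norm_num)
      _ = 1 := one_rpow _
  have hzy : z * x = y := by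
    have h1 : x ^ (-(3 : ℝ) / 4) * x ^ (1 : ℝ) = x ^ ((1 : ℝ) / 4) := by
      rw [← rpow_add hcpos]; norm_num
    rw [hydef, hzdef]; simpa using h1
  have hz1 : 1 ≤ z := by
    rw [hzdef]
    exact Real.one_le_rpow_of_pos_of_le_one_of_nonpos hcpos hc2 (by norm_num)
  have haval : a v = x * y := by
    have h1 : x ^ (1 : ℝ) * x ^ ((1 : ℝ) / 4) = x ^ ((5 : ℝ) / 4) := by
      rw [← rpow_add hcpos]; norm_num
    rw [ha v, hydef]
    simpa using h1.symm
  clear_value x y z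
  have hhv : h v ≥ h_b := hhlow v hv
  obtain ⟨ht0, htM⟩ := hσbd v hv
  set t := s ^ 2 - deriv σ v with htdef
  clear_value t
  have hxne : x ≠ 0 := hcne
  have hyne : y ≠ 0 := ne_of_gt hy0
  -- bracket simplification
  have hbr : (3 / 16) * (deriv a v) ^ 2 / a v - iteratedDeriv 2 a v / 2
      = 35 * H ^ 2 / 256 * z := by
    rw [hdav, hiter, haval]
    field_simp
    nlinarith [hzy, sq_nonneg H]
  have hK : (0 : ℝ) < s ^ 2 * μ ^ 2 := by positivity
  have h8 : 8 * M ≤ H * h_b := by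
    rwa [ge_iff_le, div_le_iff₀ hhb] at hHbig
  have hbracket : (35 * H ^ 2 / 256) * h_b - (5 * H / 8) * M ≥ 0 := by
    nlinarith [mul_le_mul_of_nonneg_left h8 (by positivity : (0:ℝ) ≤ 35 * H / 256),
      mul_nonneg hH.le hM]
  constructor
  · have key : h v * ((35 * H ^ 2 / 256) * h_b - (5 * H / 8) * M) ≤
        35 * H ^ 2 / 256 * (z * h v ^ 2) - 5 * H / 8 * (y * h v * t) := by
      have hhv0 : 0 < h v := lt_of_lt_of_le hhb hhv
      nlinarith [mul_nonneg (sub_nonneg.mpr hz1) (sq_nonneg (h v)),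
        mul_nonneg (mul_nonneg hhv0.le (sub_nonneg.mpr hy1)) ht0,
        mul_nonneg hhv0.le (sub_nonneg.mpr htM),
        mul_nonneg (mul_nonneg hH.le hhv0.le) (sub_nonneg.mpr hhv),
        sq_nonneg H]
    rw [hbr, hdav]
    have heq : 35 * H ^ 2 / 256 * z * (h v / (s * μ)) ^ 2 +
        -(5 * H / 4) * y * h v * t / (2 * s ^ 2 * μ ^ 2)
        = (35 * H ^ 2 / 256 * (z * h v ^ 2) - 5 * H / 8 * (y * h v * t)) / (s ^ 2 * μ ^ 2) := by
      field_simp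
      ring
    rw [heq]
    rw [ge_iff_le, div_mul_eq_mul_div]
    exact div_le_div_of_nonneg_right key hK.le
  · exact mul_nonneg (div_nonneg (le_trans hhb.le hhv) hK.le) hbracket
end

section
/- Let σ : ℝ → ℝ be C³ with σ'(v) > 0 everywhere, σ'' vanishing only at 0, and σ'''(0) finite, let s > 0 with s² > σ'(v̄_r) for some v̄_r > 0, and σ'(0) > 0. Then there exists v_d ∈ (0, v̄_r] such that for all v ∈ [0, v_d]: v (s² − σ'(v̄_r))/(2 s² v_d²) − σ''(v)/(2σ'(0)) ≥ σ''(v). -/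
open Real Set

theorem stmt_17 (σ : ℝ → ℝ) (s vr : ℝ)
    (hσ : ContDiff ℝ 3 σ) (hσ' : ∀ v, deriv σ v > 0)
    (hσ''0 : iteratedDeriv 2 σ 0 = 0)
    (hσ''ne : ∀ v ≠ (0:ℝ), iteratedDeriv 2 σ v ≠ 0)
    (hs : s > 0) (hvr : vr > 0) (hLax : s ^ 2 > deriv σ vr)
    (hσ'0 : deriv σ 0 > 0) :
    ∃ v_d ∈ Ioc (0 : ℝ) vr, ∀ v ∈ Icc (0 : ℝ) v_d,
      v * (s ^ 2 - deriv σ vr) / (2 * s ^ 2 * v_d ^ 2)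
        - iteratedDeriv 2 σ v / (2 * deriv σ 0) ≥ iteratedDeriv 2 σ v := by
  -- bound for third derivative on [0, vr]
  have hcont3 : Continuous (iteratedDeriv 3 σ) :=
    hσ.continuous_iteratedDeriv 3 (by norm_num)
  obtain ⟨M, hM⟩ := (isCompact_Icc (a := (0:ℝ)) (b := vr)).exists_bound_of_continuousOn
    hcont3.continuousOn
  set M' : ℝ := max M 0 with hM'def
  have hM'0 : 0 ≤ M' := le_max_right _ _
  have hM' : ∀ x ∈ Icc (0:ℝ) vr, ‖iteratedDeriv 3 σ x‖ ≤ M' :=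
    fun x hx => (hM x hx).trans (le_max_left _ _)
  -- σ'' is differentiable with derivative σ'''
  have hdiff2 : Differentiable ℝ (iteratedDeriv 2 σ) :=
    hσ.differentiable_iteratedDeriv 2 (by norm_num)
  have hderiv : ∀ x, HasDerivAt (iteratedDeriv 2 σ) (iteratedDeriv 3 σ x) x := by
    intro x
    have h3 : iteratedDeriv 3 σ = deriv (iteratedDeriv 2 σ) := iteratedDeriv_succ
    rw [h3]
    exact (hdiff2 x).hasDerivAt
  -- linear bound on σ'' on [0, vr]
  have hlin : ∀ v ∈ Icc (0:ℝ) vr, |iteratedDeriv 2 σ v| ≤ M' * v := by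
    intro v hv
    have := norm_image_sub_le_of_norm_deriv_le_segment'
      (f := iteratedDeriv 2 σ) (f' := iteratedDeriv 3 σ) (a := 0) (b := vr)
      (fun x hx => (hderiv x).hasDerivWithinAt)
      (fun x hx => hM' x (Ico_subset_Icc_self hx)) v hv
    simpa [hσ''0] using this
  set c : ℝ := s ^ 2 - deriv σ vr with hc
  have hcpos : 0 < c := by simp [hc]; linarith
  set K : ℝ := M' * (1 + 1 / (2 * deriv σ 0)) with hK
  have hfac : 0 < 1 + 1 / (2 * deriv σ 0) := by positivity
  have hKnn : 0 ≤ K := mul_nonneg hM'0 hfac.le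
  -- choose v_d
  set r : ℝ := Real.sqrt (c / (2 * s ^ 2 * (K + 1))) with hr
  have hrpos : 0 < r := Real.sqrt_pos.2 (by positivity)
  refine ⟨min vr r, ⟨lt_min hvr hrpos, min_le_left _ _⟩, ?_⟩
  intro v hv
  have hvd_pos : 0 < min vr r := lt_min hvr hrpos
  have hvle : v ≤ min vr r := hv.2
  have hv0 : 0 ≤ v := hv.1
  have hvvr : v ∈ Icc (0:ℝ) vr := ⟨hv0, hvle.trans (min_le_left _ _)⟩
  -- key: c / (2 s² vd²) ≥ K + 1 ≥ K
  have hvd2 : (min vr r) ^ 2 ≤ c / (2 * s ^ 2 * (K + 1)) := by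
    have h1 : min vr r ≤ r := min_le_right _ _
    have := Real.sq_sqrt (show (0:ℝ) ≤ c / (2 * s ^ 2 * (K + 1)) by positivity)
    nlinarith [hvd_pos, hrpos]
  have hbig : K ≤ c / (2 * s ^ 2 * (min vr r) ^ 2) := by
    rw [le_div_iff₀ (by positivity)]
    have h2 : 2 * s ^ 2 * (K + 1) > 0 := by positivity
    rw [le_div_iff₀ h2] at hvd2
    nlinarith [sq_nonneg (min vr r)]
  -- rearrange goal
  have hσ''le' : iteratedDeriv 2 σ v ≤ M' * v := (le_abs_self _).trans (hlin v hvvr)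
  have key : iteratedDeriv 2 σ v * (1 + 1 / (2 * deriv σ 0)) ≤ v * (c / (2 * s ^ 2 * (min vr r) ^ 2)) := by
    calc iteratedDeriv 2 σ v * (1 + 1 / (2 * deriv σ 0))
        ≤ (M' * v) * (1 + 1 / (2 * deriv σ 0)) := by
          exact mul_le_mul_of_nonneg_right hσ''le' hfac.le
      _ = v * K := by ring
      _ ≤ v * (c / (2 * s ^ 2 * (min vr r) ^ 2)) := mul_le_mul_of_nonneg_left hbig hv0
  have hrw : v * c / (2 * s ^ 2 * (min vr r) ^ 2) = v * (c / (2 * s ^ 2 * (min vr r) ^ 2)) := by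
    ring
  rw [ge_iff_le, hrw]
  have h2σ : (2 * deriv σ 0) ≠ 0 := by positivity
  have expand : iteratedDeriv 2 σ v * (1 + 1 / (2 * deriv σ 0))
      = iteratedDeriv 2 σ v + iteratedDeriv 2 σ v / (2 * deriv σ 0) := by
    field_simp
  linarith [key, expand.symm.le, expand.le]
end
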